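/- arXiv:1901.10759 — 3 statements merged into one kernel-verified Lean document; each statement's English description precedes it below -/
import Mathlib

section
/- Let n ≥ 1 and q_p ≥ 0 be natural numbers, and let w_i(ξ) = max(0, 1 − |ξ − i|) for i ∈ ℤ be the hat functions with integer knots. For every continuous function f : ℝ → ℝ that agrees with a polynomial of degree ≤ q_p + 1 on each interval [j, j+1] for j = 0, …, n−1, there exist real polynomials p_0, …, p_n, each of degree ≤ q_p, such that f(ξ) = Σ_{i=0}^{n} w_i(ξ) p_i(ξ) for all ξ ∈ [0, n]. (That is, hat-function blending with local polynomials of degree q_p reproduces all C⁰ splines of degree q_p + 1: span(P_global) = S^{q_p+1,0}.) -/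
/-- The hat function (piecewise linear B-spline) centred at the integer `i`. -/
noncomputable def hat (i : ℤ) (ξ : ℝ) : ℝ := max 0 (1 - |ξ - (i : ℝ)|)

lemma hat_eq_zero_of {i : ℤ} {ξ : ℝ} (h : 1 ≤ |ξ - (i : ℝ)|) : hat i ξ = 0 := by
  simp only [hat, max_eq_left_iff]; linarith

lemma hat_left {j : ℕ} {ξ : ℝ} (h1 : (j : ℝ) ≤ ξ) (h2 : ξ ≤ (j : ℝ) + 1) :
    hat ((j : ℕ) : ℤ) ξ = (j : ℝ) + 1 - ξ := by
  have : |ξ - ((j : ℤ) : ℝ)| = ξ - (j : ℝ) := by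
    rw [abs_of_nonneg] <;> · push_cast; linarith
  simp only [hat, this]
  rw [max_eq_right (by linarith)]; push_cast; ring

lemma hat_right {j : ℕ} {ξ : ℝ} (h1 : (j : ℝ) ≤ ξ) (h2 : ξ ≤ (j : ℝ) + 1) :
    hat (((j + 1 : ℕ)) : ℤ) ξ = ξ - (j : ℝ) := by
  have : |ξ - (((j + 1 : ℕ) : ℤ) : ℝ)| = (j : ℝ) + 1 - ξ := by
    push_cast; rw [abs_of_nonpos (by linarith)]; ring
  simp only [hat, this]
  rw [max_eq_right (by linarith)]; ring

/-- The recursively defined local polynomials for hat-function blending. -/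
noncomputable def blendAux (f : ℝ → ℝ) (P : ℕ → Polynomial ℝ) : ℕ → Polynomial ℝ
  | 0 => Polynomial.C (f 0)
  | (k + 1) =>
      (P k - (Polynomial.C ((k : ℝ) + 1) - Polynomial.X) * blendAux f P k) /
        (Polynomial.X - Polynomial.C (k : ℝ))

/-- Hat-function blending with local polynomials of degree `q_p` reproduces all
`C⁰` splines of degree `q_p + 1` with integer knots: every continuous function that is
piecewise polynomial of degree `≤ q_p + 1` on `[j, j+1]`, `j = 0, …, n-1`, can be written
as `Σ_{i=0}^{n} w_i(ξ)·p_i(ξ)` with `deg p_i ≤ q_p` on `[0, n]`. -/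
theorem hat_blending_reproduces_C0_splines (n q_p : ℕ) (hn : 1 ≤ n)
    (f : ℝ → ℝ) (hf : Continuous f)
    (hpiece : ∀ j : ℕ, j < n → ∃ p : Polynomial ℝ, p.natDegree ≤ q_p + 1 ∧
      ∀ ξ ∈ Set.Icc (j : ℝ) ((j : ℝ) + 1), f ξ = p.eval ξ) :
    ∃ p : Fin (n + 1) → Polynomial ℝ,
      (∀ i, (p i).natDegree ≤ q_p) ∧
      ∀ ξ ∈ Set.Icc (0 : ℝ) (n : ℝ),
        f ξ = ∑ i : Fin (n + 1), hat ((i : ℕ) : ℤ) ξ * (p i).eval ξ := by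
  classical
  choose P₀ hPdeg₀ hPval₀ using hpiece
  set P : ℕ → Polynomial ℝ := fun j => if h : j < n then P₀ j h else 0 with hPdef
  have hPdeg : ∀ j, j < n → (P j).natDegree ≤ q_p + 1 := by
    intro j hj; simp only [hPdef, dif_pos hj]; exact hPdeg₀ j hj
  have hPval : ∀ j, j < n → ∀ ξ ∈ Set.Icc (j : ℝ) ((j : ℝ) + 1),
      f ξ = (P j).eval ξ := by
    intro j hj; simp only [hPdef, dif_pos hj]; exact hPval₀ j hj
  set p : ℕ → Polynomial ℝ := blendAux f P with hpdef
  have hp0 : p 0 = Polynomial.C (f 0) := rfl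
  have hps : ∀ k, p (k + 1) =
      (P k - (Polynomial.C ((k : ℝ) + 1) - Polynomial.X) * p k) /
        (Polynomial.X - Polynomial.C (k : ℝ)) := fun k => rfl
  have hXC : ∀ a : ℝ, (Polynomial.X - Polynomial.C a) ≠ 0 := fun a =>
    Polynomial.X_sub_C_ne_zero a
  -- evaluation invariant
  have heval : ∀ j, j ≤ n → (p j).eval (j : ℝ) = f j := by
    intro j
    induction j with
    | zero =>
      intro _
      have h0n : 0 < n := hn
      have := hPval 0 h0n 0 (by constructor <;> norm_num)
      simp [hp0, this]
    | succ k ih =>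
      intro hk1
      have hkn : k < n := hk1
      have hke : (p k).eval (k : ℝ) = f k := ih (le_of_lt hkn)
      have hPk : f k = (P k).eval (k : ℝ) :=
        hPval k hkn k ⟨le_refl _, by linarith⟩
      set g := P k - (Polynomial.C ((k : ℝ) + 1) - Polynomial.X) * p k with hg
      have hroot : g.IsRoot (k : ℝ) := by
        simp [hg, Polynomial.IsRoot, hke, ← hPk]
      have hdvd : (Polynomial.X - Polynomial.C (k : ℝ)) ∣ g :=
        Polynomial.dvd_iff_isRoot.mpr hroot
      have hmul : (Polynomial.X - Polynomial.C (k : ℝ)) * p (k + 1) = g := by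
        rw [hps k, ← hg]
        exact EuclideanDomain.mul_div_cancel' (hXC _) hdvd
      have := congrArg (Polynomial.eval ((k : ℝ) + 1)) hmul
      simp only [Polynomial.eval_mul, Polynomial.eval_sub, Polynomial.eval_X,
        Polynomial.eval_C, hg, Polynomial.eval_add] at this
      have hfk1 : f ((k : ℝ) + 1) = (P k).eval ((k : ℝ) + 1) :=
        hPval k hkn _ ⟨by linarith, le_refl _⟩
      have : (p (k + 1)).eval ((k : ℝ) + 1) = (P k).eval ((k : ℝ) + 1) := by
        nlinarith [this]
      push_cast
      rw [this, ← hfk1]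
  -- multiplication identity
  have hmulid : ∀ k, k < n → (Polynomial.X - Polynomial.C (k : ℝ)) * p (k + 1) =
      P k - (Polynomial.C ((k : ℝ) + 1) - Polynomial.X) * p k := by
    intro k hkn
    have hke : (p k).eval (k : ℝ) = f k := heval k (le_of_lt hkn)
    have hPk : f k = (P k).eval (k : ℝ) :=
      hPval k hkn k ⟨le_refl _, by linarith⟩
    have hroot : (P k - (Polynomial.C ((k : ℝ) + 1) - Polynomial.X) * p k).IsRoot (k : ℝ) := by
      simp [Polynomial.IsRoot, hke, ← hPk]
    have hdvd := Polynomial.dvd_iff_isRoot.mpr hroot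
    rw [hps k]
    exact EuclideanDomain.mul_div_cancel' (hXC _) hdvd
  -- degree invariant
  have hdeg : ∀ j, j ≤ n → (p j).natDegree ≤ q_p := by
    intro j
    induction j with
    | zero => intro _; simp [hp0]
    | succ k ih =>
      intro hk1
      have hkn : k < n := hk1
      have ihk := ih (le_of_lt hkn)
      by_cases hz : p (k + 1) = 0
      · simp [hz]
      · have hmul := hmulid k hkn
        have hgdeg : (P k - (Polynomial.C ((k : ℝ) + 1) - Polynomial.X) * p k).natDegree
            ≤ q_p + 1 := by
          refine le_trans (Polynomial.natDegree_sub_le _ _) ?_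
          refine max_le (hPdeg k hkn) ?_
          refine le_trans (Polynomial.natDegree_mul_le) ?_
          have h1 : (Polynomial.C ((k : ℝ) + 1) - Polynomial.X).natDegree ≤ 1 := by
            refine le_trans (Polynomial.natDegree_sub_le _ _) (max_le ?_ ?_)
            · exact le_trans (Polynomial.natDegree_C ((k : ℝ) + 1)).le (by norm_num)
            · exact le_of_eq Polynomial.natDegree_X
          omega
        have := Polynomial.natDegree_mul (hXC (k : ℝ)) hz
        rw [hmul] at this
        have hXdeg : (Polynomial.X - Polynomial.C (k : ℝ)).natDegree = 1 :=
          Polynomial.natDegree_X_sub_C _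
        omega
  refine ⟨fun i => p i, fun i => hdeg i (Nat.lt_succ_iff.mp i.2), ?_⟩
  intro ξ hξ
  obtain ⟨hξ0, hξn⟩ := hξ
  -- choose the interval index
  set j : ℕ := min (⌊ξ⌋.toNat) (n - 1) with hjdef
  have hjn : j < n := by
    have : j ≤ n - 1 := min_le_right _ _
    omega
  have hfloor : (0 : ℤ) ≤ ⌊ξ⌋ := Int.le_floor.mpr (by exact_mod_cast hξ0)
  have hjle : (j : ℝ) ≤ ξ := by
    have h1 : (j : ℤ) ≤ ⌊ξ⌋ := by
      have : j ≤ ⌊ξ⌋.toNat := min_le_left _ _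
      omega
    calc (j : ℝ) ≤ (⌊ξ⌋ : ℝ) := by exact_mod_cast h1
      _ ≤ ξ := Int.floor_le ξ
  have hjge : ξ ≤ (j : ℝ) + 1 := by
    rcases le_or_gt (⌊ξ⌋.toNat) (n - 1) with h | h
    · have hj' : j = ⌊ξ⌋.toNat := min_eq_left h
      have : ξ < (⌊ξ⌋ : ℝ) + 1 := Int.lt_floor_add_one ξ
      have hcast : ((⌊ξ⌋.toNat : ℕ) : ℝ) = ((⌊ξ⌋ : ℤ) : ℝ) := by
        exact_mod_cast Int.toNat_of_nonneg hfloor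
      rw [hj', hcast]
      linarith
    · have hj' : j = n - 1 := min_eq_right (le_of_lt h)
      have : (j : ℝ) + 1 = (n : ℝ) := by
        rw [hj']; push_cast [Nat.cast_sub hn]; ring
      linarith
  -- the two relevant indices
  have hjlt : j < n + 1 := by omega
  have hj1lt : j + 1 < n + 1 := by omega
  set a : Fin (n + 1) := ⟨j, hjlt⟩
  set b : Fin (n + 1) := ⟨j + 1, hj1lt⟩
  have hab : a ≠ b := by
    simp [a, b, Fin.ext_iff]
  have hsum : ∑ i : Fin (n + 1), hat ((i : ℕ) : ℤ) ξ * (p i).eval ξ =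
      hat ((j : ℕ) : ℤ) ξ * (p j).eval ξ +
        hat (((j + 1 : ℕ)) : ℤ) ξ * (p (j + 1)).eval ξ := by
    rw [Finset.sum_eq_add a b hab ?_ (by simp) (by simp)]
    intro c _ ⟨hca, hcb⟩
    have hc1 : (c : ℕ) ≠ j := fun h => hca (by simp [a, Fin.ext_iff, h])
    have hc2 : (c : ℕ) ≠ j + 1 := fun h => hcb (by simp [b, Fin.ext_iff, h])
    have hzero : hat (((c : ℕ) : ℤ)) ξ = 0 := by
      apply hat_eq_zero_of
      rcases (by omega : (c : ℕ) + 1 ≤ j ∨ j + 2 ≤ (c : ℕ)) with h | h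
      · have : ((c : ℕ) : ℝ) + 1 ≤ (j : ℝ) := by exact_mod_cast h
        rw [abs_of_nonneg (by push_cast; linarith)]
        push_cast; linarith
      · have : (j : ℝ) + 2 ≤ ((c : ℕ) : ℝ) := by exact_mod_cast h
        rw [abs_of_nonpos (by push_cast; linarith)]
        push_cast; linarith
    rw [hzero, zero_mul]
  rw [hsum, hat_left hjle hjge, hat_right hjle hjge]
  have hfξ : f ξ = (P j).eval ξ := hPval j hjn ξ ⟨hjle, hjge⟩
  have := congrArg (Polynomial.eval ξ) (hmulid j hjn)
  simp only [Polynomial.eval_mul, Polynomial.eval_sub, Polynomial.eval_X,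
    Polynomial.eval_C] at this
  rw [hfξ]
  nlinarith [this]
end

section
/- Let q_w ≥ 1, q_p ≥ 0 and n ≥ 0 be natural numbers. For every function f : ℝ → ℝ that is (q_w − 1)-times continuously differentiable on [0, n+1] and agrees with a polynomial of degree ≤ q_w + q_p on each interval [j, j+1] for j = 0, …, n, there exist functions s_0, …, s_{q_p} : ℝ → ℝ, each (q_w − 1)-times continuously differentiable on [0, n+1] and agreeing with a polynomial of degree ≤ q_w on each interval [j, j+1] for j = 0, …, n, such that f(ξ) = Σ_{j=0}^{q_p} ξ^j · s_j(ξ) for all ξ ∈ [0, n+1]. (That is, blending by splines of degree q_w and smoothness C^{q_w−1} with local polynomials of degree q_p reproduces the full spline space: span(P_global) = S^{q_w+q_p, q_w−1}.) -/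
/-!
Let `p k` be the piece of `f` on `[k, k + 1]`. As `f` is `C^(q_w - 1)` across the knot `k + 1`,
the derivatives of order `< q_w` of `p (k + 1)` and `p k` agree there, so
`p (k + 1) - p k = (X - (k + 1)) ^ q_w * r k` with `deg r k ≤ q_p`. Telescoping gives
`f ξ = p 0 (ξ) + ∑ k, (ξ - (k + 1))₊ ^ q_w * r k (ξ)` on `[0, n + 1]`. Splitting
`p 0 = ∑ j ≤ q_p, X ^ j * a j` with `deg a j ≤ q_w` and collecting the coefficient of `ξ ^ j` in
each `r k` gives `s j = a j + ∑ k, (r k).coeff j • (· - (k + 1))₊ ^ q_w`, a combination of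
truncated powers, which are `C^(q_w - 1)` splines of degree `q_w`.
-/

open Set Polynomial

noncomputable def truncPow (c : ℝ) (k : ℕ) (x : ℝ) : ℝ := max (x - c) 0 ^ k

section TruncPow

variable {c x : ℝ} {k : ℕ}

lemma truncPow_of_le (hx : x ≤ c) : truncPow c (k + 1) x = 0 := by
  simp [truncPow, max_eq_right (sub_nonpos.2 hx)]

lemma truncPow_of_ge (hx : c ≤ x) : truncPow c k x = (x - c) ^ k := by
  simp [truncPow, max_eq_left (sub_nonneg.2 hx)]

lemma hasDerivAt_truncPow (c x : ℝ) (k : ℕ) :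
    HasDerivAt (truncPow c (k + 2)) ((k + 2) * truncPow c (k + 1) x) x := by
  have hpow : ∀ y, HasDerivAt (fun y => (y - c) ^ (k + 2)) ((k + 2) * (y - c) ^ (k + 1)) y := by
    intro y
    simpa using (hasDerivAt_pow (k + 2) (y - c)).comp_sub_const y c
  rcases lt_trichotomy x c with hxc | rfl | hcx
  · rw [truncPow_of_le hxc.le, mul_zero]
    refine (hasDerivAt_const x 0).congr_of_eventuallyEq ?_
    filter_upwards [eventually_lt_nhds hxc] with y hy using truncPow_of_le hy.le
  · have hleft : HasDerivWithinAt (truncPow x (k + 2)) 0 (Iic x) x :=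
      (hasDerivWithinAt_const x _ 0).congr (fun y hy => truncPow_of_le hy) (truncPow_of_le le_rfl)
    have hright : HasDerivWithinAt (truncPow x (k + 2)) 0 (Ici x) x := by
      have h0 : HasDerivAt (fun y => (y - x) ^ (k + 2)) 0 x := by simpa using hpow x
      exact h0.hasDerivWithinAt.congr (fun y hy => truncPow_of_ge hy) (truncPow_of_ge le_rfl)
    simpa [truncPow_of_le] using (hleft.union hright).hasDerivAt (by simp)
  · rw [truncPow_of_ge hcx.le]
    refine (hpow x).congr_of_eventuallyEq ?_
    filter_upwards [eventually_gt_nhds hcx] with y hy using truncPow_of_ge hy.le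

lemma contDiff_truncPow (c : ℝ) (k : ℕ) : ContDiff ℝ k (truncPow c (k + 1)) := by
  induction k with
  | zero =>
    rw [Nat.cast_zero, contDiff_zero]
    exact ((continuous_sub_right c).max continuous_const).pow 1
  | succ k ih =>
    rw [Nat.cast_succ, contDiff_succ_iff_deriv]
    refine ⟨fun x => (hasDerivAt_truncPow c x k).differentiableAt, by simp, ?_⟩
    rw [funext fun x => (hasDerivAt_truncPow c x k).deriv]
    exact contDiff_const.mul ih

end TruncPow

lemma Polynomial.Monic.exists_eq_mul_natDegree_le {R : Type*} [Semiring R] {g m : R[X]} {q : ℕ}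
    (hm : m.Monic) (hdvd : m ∣ g) (hg : g.natDegree ≤ m.natDegree + q) :
    ∃ r : R[X], r.natDegree ≤ q ∧ g = m * r := by
  obtain ⟨r, rfl⟩ := hdvd
  refine ⟨r, ?_, rfl⟩
  rcases eq_or_ne r 0 with rfl | hr
  · simp
  · rw [hm.natDegree_mul' hr] at hg
    omega

lemma Polynomial.exists_eq_sum_X_pow_mul {R : Type*} [Semiring R] {p : R[X]} {d q : ℕ}
    (hp : p.natDegree ≤ d + q) :
    ∃ a : Fin (q + 1) → R[X], (∀ j, (a j).natDegree ≤ d) ∧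
      p = ∑ j : Fin (q + 1), X ^ (j : ℕ) * a j := by
  induction q generalizing p with
  | zero => exact ⟨fun _ => p, fun _ => hp, by simp⟩
  | succ q ih =>
    have hdivX : p.divX.natDegree ≤ d + q := by
      rw [natDegree_divX_eq_natDegree_tsub_one]
      omega
    obtain ⟨b, hb, hpb⟩ := ih hdivX
    refine ⟨Fin.cons (C (p.coeff 0)) b, Fin.cases (by simp) hb, ?_⟩
    calc p = C (p.coeff 0) + X * p.divX := by rw [add_comm, X_mul_divX_add]
      _ = _ := by
        rw [Fin.sum_univ_succ, hpb, Finset.mul_sum]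
        simp [pow_succ', mul_assoc]

lemma Polynomial.iteratedDeriv_eval {𝕜 : Type*} [NontriviallyNormedField 𝕜] (p : 𝕜[X]) (k : ℕ) :
    iteratedDeriv k (fun x => p.eval x) = fun x => (derivative^[k] p).eval x := by
  induction k generalizing p with
  | zero => simp
  | succ k ih =>
    -- inside `Polynomial`, the bare names `deriv` and `funext` refer to `Polynomial.deriv` and
    -- `Polynomial.funext`
    have hderiv : _root_.deriv (fun x => p.eval x) = fun x => (derivative p).eval x :=
      _root_.funext fun x => Polynomial.deriv p
    rw [iteratedDeriv_succ', hderiv, ih, Function.iterate_succ_apply]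

lemma Polynomial.contDiff_eval {𝕜 : Type*} [NontriviallyNormedField 𝕜] (p : 𝕜[X])
    (n : WithTop ℕ∞) : ContDiff 𝕜 n (fun x => p.eval x) :=
  p.contDiff_aeval (𝕜 := 𝕜) n

lemma iteratedDerivWithin_eq_eval_iterate_derivative {𝕜 : Type*} [NontriviallyNormedField 𝕜]
    {f : 𝕜 → 𝕜} {p : 𝕜[X]} {s t : Set 𝕜} {x : 𝕜} {m k : ℕ} (hst : s ⊆ t)
    (hs : UniqueDiffOn 𝕜 s) (ht : UniqueDiffOn 𝕜 t) (hf : ContDiffOn 𝕜 m f t)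
    (hfp : EqOn f (fun x => p.eval x) s) (hx : x ∈ s) (hk : k ≤ m) :
    iteratedDerivWithin k f t x = (derivative^[k] p).eval x := by
  have hsub : iteratedDerivWithin k f s x = iteratedDerivWithin k f t x := by
    simp only [iteratedDerivWithin_eq_iteratedFDerivWithin]
    rw [iteratedFDerivWithin_subset hst hs ht (hf.of_le (by exact_mod_cast hk)) hx]
  rw [← hsub, iteratedDerivWithin_congr hfp hx,
    iteratedDerivWithin_eq_iteratedDeriv hs (p.contDiff_eval k).contDiffAt hx,
    p.iteratedDeriv_eval]

lemma pow_X_sub_C_dvd_sub_of_contDiffOn {f : ℝ → ℝ} {p q : ℝ[X]} {a b c : ℝ} {m : ℕ}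
    (hac : a < c) (hcb : c < b) (hf : ContDiffOn ℝ m f (Icc a b))
    (hp : EqOn f (fun x => p.eval x) (Icc a c)) (hq : EqOn f (fun x => q.eval x) (Icc c b)) :
    (X - C c) ^ (m + 1) ∣ q - p := by
  rcases eq_or_ne (q - p) 0 with h | h
  · simp [h]
  rw [← le_rootMultiplicity_iff h, Nat.succ_le_iff,
    lt_rootMultiplicity_iff_isRoot_iterate_derivative h]
  intro k hk
  have hu : UniqueDiffOn ℝ (Icc a b) := uniqueDiffOn_Icc (hac.trans hcb)
  have hleft := iteratedDerivWithin_eq_eval_iterate_derivative (Icc_subset_Icc_right hcb.le)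
    (uniqueDiffOn_Icc hac) hu hf hp ⟨hac.le, le_rfl⟩ hk
  have hright := iteratedDerivWithin_eq_eval_iterate_derivative (Icc_subset_Icc_left hac.le)
    (uniqueDiffOn_Icc hcb) hu hf hq ⟨le_rfl, hcb.le⟩ hk
  simp [IsRoot, ← hleft, ← hright]

/-- The space `S^{d,r}` on `[0, n + 1]` with inner knots `1, …, n`. -/
def splineSpace (d r n : ℕ) : Submodule ℝ (ℝ → ℝ) where
  carrier := {f | ContDiffOn ℝ r f (Icc 0 ((n : ℝ) + 1)) ∧
    ∀ k : ℕ, k ≤ n → ∃ p : ℝ[X], p.natDegree ≤ d ∧ ∀ ξ ∈ Icc (k : ℝ) (k + 1), f ξ = p.eval ξ}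
  zero_mem' := ⟨contDiffOn_const, fun _ _ => ⟨0, by simp, by simp⟩⟩
  add_mem' := by
    rintro f g ⟨hf, hfp⟩ ⟨hg, hgp⟩
    refine ⟨hf.add hg, fun k hk => ?_⟩
    obtain ⟨p, hp, hfp⟩ := hfp k hk
    obtain ⟨q, hq, hgq⟩ := hgp k hk
    exact ⟨p + q, natDegree_add_le_of_degree_le hp hq, fun ξ hξ => by simp [hfp ξ hξ, hgq ξ hξ]⟩
  smul_mem' := by
    rintro c f ⟨hf, hfp⟩
    refine ⟨hf.const_smul c, fun k hk => ?_⟩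
    obtain ⟨p, hp, hfp⟩ := hfp k hk
    exact ⟨c • p, (natDegree_smul_le c p).trans hp, fun ξ hξ => by simp [hfp ξ hξ]⟩

section splineSpace

variable {d r n : ℕ}

lemma polynomial_mem_splineSpace {p : ℝ[X]} (hp : p.natDegree ≤ d) :
    (fun x => p.eval x) ∈ splineSpace d r n :=
  ⟨(p.contDiff_eval r).contDiffOn, fun _ _ => ⟨p, hp, fun _ _ => rfl⟩⟩

lemma truncPow_mem_splineSpace (i : ℕ) (hd : r + 1 ≤ d) :
    truncPow i (r + 1) ∈ splineSpace d r n := by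
  refine ⟨(contDiff_truncPow _ r).contDiffOn, fun k _ => ?_⟩
  rcases le_or_gt i k with hik | hki
  · refine ⟨(X - C (i : ℝ)) ^ (r + 1), by rwa [natDegree_pow, natDegree_X_sub_C, mul_one],
      fun ξ hξ => ?_⟩
    have : (i : ℝ) ≤ ξ := le_trans (by exact_mod_cast hik) hξ.1
    simp [truncPow_of_ge this]
  · refine ⟨0, by simp, fun ξ hξ => ?_⟩
    have : ξ ≤ i := hξ.2.trans (by exact_mod_cast hki)
    simp [truncPow_of_le this]

end splineSpace

lemma exists_nat_le_mem_Icc {ξ : ℝ} {n : ℕ} (hξ : ξ ∈ Icc (0 : ℝ) (n + 1)) :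
    ∃ k ≤ n, ξ ∈ Icc (k : ℝ) (k + 1) := by
  rcases lt_or_ge ξ n with hlt | hge
  · exact ⟨⌊ξ⌋₊, ((Nat.floor_lt hξ.1).2 hlt).le, Nat.floor_le hξ.1, (Nat.lt_floor_add_one ξ).le⟩
  · exact ⟨n, le_rfl, hge, hξ.2⟩

lemma eq_eval_add_sum_truncPow_mul {f : ℝ → ℝ} {n m : ℕ} {p r : ℕ → ℝ[X]}
    (hp : ∀ k ≤ n, ∀ ξ ∈ Icc (k : ℝ) (k + 1), f ξ = (p k).eval ξ)
    (hr : ∀ i < n, p (i + 1) - p i = (X - C ((i : ℝ) + 1)) ^ (m + 1) * r i)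
    {ξ : ℝ} (hξ : ξ ∈ Icc (0 : ℝ) (n + 1)) :
    f ξ = (p 0).eval ξ + ∑ i ∈ Finset.range n, truncPow (i + 1) (m + 1) ξ * (r i).eval ξ := by
  obtain ⟨k, hkn, hξk⟩ := exists_nat_le_mem_Icc hξ
  have hfar : ∀ i ∈ Finset.Ico k n, truncPow (i + 1) (m + 1) ξ * (r i).eval ξ = 0 := by
    intro i hi
    have : ξ ≤ (i : ℝ) + 1 :=
      hξk.2.trans (by exact_mod_cast Nat.succ_le_succ (Finset.mem_Ico.1 hi).1)
    rw [truncPow_of_le this, zero_mul]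
  have hnear : ∀ i ∈ Finset.range k,
      truncPow (i + 1) (m + 1) ξ * (r i).eval ξ = (p (i + 1) - p i).eval ξ := by
    intro i hi
    have : (i : ℝ) + 1 ≤ ξ := le_trans (by exact_mod_cast Finset.mem_range.1 hi) hξk.1
    rw [hr i ((Finset.mem_range.1 hi).trans_le hkn), truncPow_of_ge this]
    simp
  rw [← Finset.sum_range_add_sum_Ico _ hkn, Finset.sum_eq_zero hfar, Finset.sum_congr rfl hnear,
    ← eval_finsetSum, Finset.sum_range_sub, hp k hkn ξ hξk]
  simp

lemma exists_sub_eq_pow_X_sub_C_mul_of_contDiffOn {f : ℝ → ℝ} {n m q : ℕ} {p : ℕ → ℝ[X]}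
    (hf : ContDiffOn ℝ m f (Icc 0 ((n : ℝ) + 1)))
    (hp_deg : ∀ k ≤ n, (p k).natDegree ≤ m + 1 + q)
    (hp : ∀ k ≤ n, ∀ ξ ∈ Icc (k : ℝ) (k + 1), f ξ = (p k).eval ξ) {i : ℕ} (hi : i < n) :
    ∃ r : ℝ[X], r.natDegree ≤ q ∧ p (i + 1) - p i = (X - C ((i : ℝ) + 1)) ^ (m + 1) * r := by
  have hin : (i : ℝ) + 2 ≤ n + 1 := by
    have : (i : ℝ) + 1 ≤ n := by exact_mod_cast hi
    linarith
  have hdvd := pow_X_sub_C_dvd_sub_of_contDiffOn (a := i) (b := i + 2) (by linarith) (by linarith)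
    (hf.mono (Icc_subset_Icc (Nat.cast_nonneg i) hin)) (hp i hi.le)
    (fun ξ hξ => hp (i + 1) hi ξ (by push_cast; constructor <;> linarith [hξ.1, hξ.2]))
  refine ((monic_X_sub_C _).pow _).exists_eq_mul_natDegree_le hdvd ?_
  rw [natDegree_pow, natDegree_X_sub_C, mul_one]
  exact (natDegree_sub_le _ _).trans (max_le (hp_deg _ hi) (hp_deg _ hi.le))

/-- Blending by splines of degree `q_w` and smoothness `C^{q_w - 1}` with local polynomials
of degree `q_p` reproduces the full spline space `S^{q_w+q_p, q_w-1}`: every function that is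
`C^{q_w-1}` on `[0, n+1]` and piecewise polynomial of degree `≤ q_w + q_p` on the integer
intervals `[j, j+1]`, `j = 0, …, n`, can be written as `Σ_{j=0}^{q_p} ξ^j · s_j(ξ)` with each
`s_j` a `C^{q_w-1}` spline of degree `≤ q_w` on the same knot intervals. -/
theorem spline_blending_reproduces_spline_space (q_w q_p n : ℕ) (hqw : 1 ≤ q_w)
    (f : ℝ → ℝ)
    (hf : ContDiffOn ℝ (q_w - 1 : ℕ) f (Set.Icc (0 : ℝ) ((n : ℝ) + 1)))
    (hpiece : ∀ j : ℕ, j ≤ n → ∃ p : Polynomial ℝ, p.natDegree ≤ q_w + q_p ∧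
      ∀ ξ ∈ Set.Icc (j : ℝ) ((j : ℝ) + 1), f ξ = p.eval ξ) :
    ∃ s : Fin (q_p + 1) → ℝ → ℝ,
      (∀ j : Fin (q_p + 1),
        ContDiffOn ℝ (q_w - 1 : ℕ) (s j) (Set.Icc (0 : ℝ) ((n : ℝ) + 1)) ∧
        ∀ k : ℕ, k ≤ n → ∃ p : Polynomial ℝ, p.natDegree ≤ q_w ∧
          ∀ ξ ∈ Set.Icc (k : ℝ) ((k : ℝ) + 1), s j ξ = p.eval ξ) ∧
      ∀ ξ ∈ Set.Icc (0 : ℝ) ((n : ℝ) + 1),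
        f ξ = ∑ j : Fin (q_p + 1), ξ ^ (j : ℕ) * s j ξ := by
  obtain ⟨m, rfl⟩ : ∃ m, q_w = m + 1 := ⟨q_w - 1, by omega⟩
  rw [Nat.add_sub_cancel] at hf ⊢
  choose! p hp_deg hp using hpiece
  choose! r hr_deg hr using fun i (hi : i < n) =>
    exists_sub_eq_pow_X_sub_C_mul_of_contDiffOn hf hp_deg hp hi
  obtain ⟨a, ha_deg, ha⟩ := exists_eq_sum_X_pow_mul (hp_deg 0 n.zero_le)
  refine ⟨fun j => (fun x => (a j).eval x) +
      ∑ i ∈ Finset.range n, (r i).coeff j • truncPow ((i + 1 : ℕ) : ℝ) (m + 1),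
    fun j => add_mem (polynomial_mem_splineSpace (ha_deg j))
      (Submodule.sum_mem _ fun i _ => Submodule.smul_mem _ _ (truncPow_mem_splineSpace _ le_rfl)),
    fun ξ hξ => ?_⟩
  have hr_eval : ∀ i < n, (r i).eval ξ = ∑ j : Fin (q_p + 1), (r i).coeff j * ξ ^ (j : ℕ) :=
    fun i hi => by
      rw [eval_eq_sum_range' (Nat.lt_succ_of_le (hr_deg i hi)),
        Fin.sum_univ_eq_sum_range (fun j => (r i).coeff j * ξ ^ j)]
  rw [eq_eval_add_sum_truncPow_mul hp hr hξ, ha, eval_finsetSum]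
  simp only [Pi.add_apply, Finset.sum_apply, Pi.smul_apply, smul_eq_mul, eval_mul, eval_pow,
    eval_X, mul_add, Finset.mul_sum, Finset.sum_add_distrib, Nat.cast_succ]
  rw [Finset.sum_comm (s := Finset.univ)]
  congr 1
  refine Finset.sum_congr rfl fun i hi => ?_
  rw [hr_eval i (Finset.mem_range.1 hi), Finset.mul_sum]
  exact Finset.sum_congr rfl fun j _ => by ring
end

section
/- For i ∈ ℤ define w*_i : ℝ → ℝ by w*_i(ξ) = (1/2)·B(4ξ − 4i) + B(4ξ − 4i − 1) + B(4ξ − 4i − 2) + B(4ξ − 4i − 3) + (1/2)·B(4ξ − 4i − 4), where B is the cubic cardinal B-spline. Then: (a) Σ_{i∈ℤ} w*_i(ξ) = 1 for every ξ ∈ ℝ; (b) w*_i(ξ) = 0 whenever ξ ∉ [i, i+2]; (c) for every ξ ∈ ℝ at most two of the values w*_i(ξ), i ∈ ℤ, are nonzero; (d) each w*_i is twice continuously differentiable on ℝ; and (e) each w*_i agrees with a polynomial of degree ≤ 3 on each interval [k/4, (k+1)/4] for every k ∈ ℤ. (Polynomial one-ring blending functions obtained from five consecutive cubic B-splines with mask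 (1/2, 1, 1, 1, 1/2).) -/
/-!
Writing `t₊ = max t 0`, the B-spline is the fourth difference of the truncated cubic,
`B t = ∑ₖ (-1)ᵏ (4 choose k) (t - k)₊³ / 6`. Since `t₊³` is `C²`, so is `B`, and since every
`(t - k)₊³` is a polynomial on an interval between consecutive integers, so is `B`. Both
properties pass to `w*_i(ξ) = φ(4ξ - 4i)`, where `φ u = ½B(u) + B(u-1) + B(u-2) + B(u-3) + ½B(u-4)`.

The profile `φ` vanishes outside `(0, 8)`, so `w*_i` vanishes outside `(i, i + 2)` and only
`i = ⌊ξ⌋ - 1, ⌊ξ⌋` can contribute at `ξ`. In `φ(u + 4) + φ(u)` the two half weights merge, and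
what remains is the partition of unity `∑ⱼ B(u - j) = 1` of the integer translates of `B`.
-/

/-- The cubic cardinal B-spline with knots `0, 1, 2, 3, 4`. -/
noncomputable def cubicB (t : ℝ) : ℝ :=
  if t ≤ 0 then 0
  else if t ≤ 1 then t ^ 3 / 6
  else if t ≤ 2 then (-3 * t ^ 3 + 12 * t ^ 2 - 12 * t + 4) / 6
  else if t ≤ 3 then (3 * t ^ 3 - 24 * t ^ 2 + 60 * t - 44) / 6
  else if t ≤ 4 then (4 - t) ^ 3 / 6
  else 0

open Polynomial Set

theorem hasDerivAt_max_zero_pow {n : ℕ} (hn : n ≠ 0) (x : ℝ) :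
    HasDerivAt (fun y : ℝ => max y 0 ^ (n + 1)) ((n + 1) * max x 0 ^ n) x := by
  refine hasDerivAt_of_hasDerivAt_of_ne' (f := fun y : ℝ => max y 0 ^ (n + 1)) (x := 0)
    (fun y hy => ?_) ((continuous_id.max continuous_const).pow _).continuousAt
    (continuous_const.mul ((continuous_id.max continuous_const).pow _)).continuousAt x
  rcases hy.lt_or_gt with hy | hy
  · have hzero : (fun y : ℝ => max y 0 ^ (n + 1)) =ᶠ[nhds y] fun _ => 0 := by
      filter_upwards [Iio_mem_nhds hy] with z hz
      simp [max_eq_right (mem_Iio.1 hz).le]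
    simpa [max_eq_right hy.le, hn] using (hasDerivAt_const y (0 : ℝ)).congr_of_eventuallyEq hzero
  · have hpow : (fun y : ℝ => max y 0 ^ (n + 1)) =ᶠ[nhds y] fun z => z ^ (n + 1) := by
      filter_upwards [Ioi_mem_nhds hy] with z hz
      simp [max_eq_left (mem_Ioi.1 hz).le]
    simpa [max_eq_left hy.le] using (hasDerivAt_pow (n + 1) y).congr_of_eventuallyEq hpow

theorem contDiff_max_zero_pow (n : ℕ) : ContDiff ℝ n (fun x : ℝ => max x 0 ^ (n + 1)) := by
  induction n with
  | zero => simpa using continuous_id.max continuous_const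
  | succ n ih =>
    have hderiv := hasDerivAt_max_zero_pow n.succ_ne_zero
    rw [Nat.cast_succ, contDiff_succ_iff_deriv]
    refine ⟨fun x => (hderiv x).differentiableAt, by simp, ?_⟩
    rw [funext fun x => (hderiv x).deriv]
    exact contDiff_const.mul ih

def polyOn (d : ℕ) (s : Set ℝ) : Submodule ℝ (ℝ → ℝ) where
  carrier := {f | ∃ p : ℝ[X], p.natDegree ≤ d ∧ EqOn f (fun x => p.eval x) s}
  add_mem' := by
    rintro f g ⟨p, hp, hfp⟩ ⟨q, hq, hgq⟩
    exact ⟨p + q, (natDegree_add_le p q).trans (max_le hp hq),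
      fun x hx => by simp [hfp hx, hgq hx]⟩
  zero_mem' := ⟨0, by simp, fun x _ => by simp⟩
  smul_mem' := by
    rintro c f ⟨p, hp, hfp⟩
    exact ⟨C c * p, (natDegree_C_mul_le c p).trans hp, fun x hx => by simp [hfp hx]⟩

theorem comp_mem_polyOn_of_affine {d : ℕ} {s t : Set ℝ} {f g : ℝ → ℝ} (hf : f ∈ polyOn d t)
    (a b : ℝ) (hg : ∀ x, g x = a * x + b) (hst : MapsTo g s t) : f ∘ g ∈ polyOn d s := by
  obtain ⟨p, hp, hfp⟩ := hf
  refine ⟨p.comp (C a * X + C b), ?_, fun x hx => ?_⟩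
  · calc (p.comp (C a * X + C b)).natDegree ≤ p.natDegree * 1 :=
          natDegree_comp_le.trans (Nat.mul_le_mul_left _ natDegree_linear_le)
      _ ≤ d := by simpa using hp
  · rw [Function.comp_apply, hfp (hst hx), hg]
    simp

theorem max_sub_pow_mem_polyOn (n : ℕ) {s : Set ℝ} {c : ℝ} (hs : s ⊆ Ici c ∨ s ⊆ Iic c) :
    (fun x => max (x - c) 0 ^ n) ∈ polyOn n s := by
  rcases hs with hs | hs
  · refine ⟨(X - C c) ^ n, natDegree_pow_le.trans (by simp), fun x hx => ?_⟩
    simp [max_eq_left (sub_nonneg.2 (mem_Ici.1 (hs hx)))]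
  · refine ⟨C (0 ^ n), by simp, fun x hx => ?_⟩
    simp [max_eq_right (sub_nonpos.2 (mem_Iic.1 (hs hx)))]

theorem cubicB_eq_sum (t : ℝ) :
    cubicB t = ∑ k ∈ Finset.range 5, (-1) ^ k * (Nat.choose 4 k / 6 : ℝ) * max (t - k) 0 ^ 3 := by
  simp only [Finset.sum_range_succ, Finset.sum_range_zero, cubicB, max_def]
  norm_num [Nat.choose]
  split_ifs <;> first | (exfalso; linarith) | ring

@[fun_prop]
theorem contDiff_cubicB : ContDiff ℝ 2 cubicB := by
  rw [funext cubicB_eq_sum]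
  exact ContDiff.sum fun k _ => contDiff_const.mul
    ((contDiff_max_zero_pow 2).comp (contDiff_id.sub contDiff_const))

theorem cubicB_mem_polyOn_Icc (m : ℤ) : cubicB ∈ polyOn 3 (Icc m (m + 1)) := by
  have hsum : cubicB = ∑ k ∈ Finset.range 5,
      ((-1) ^ k * (Nat.choose 4 k / 6 : ℝ)) • fun t : ℝ => max (t - k) 0 ^ 3 := by
    funext t
    simp [cubicB_eq_sum, Finset.sum_apply]
  rw [hsum]
  refine Submodule.sum_mem _ fun k _ => Submodule.smul_mem _ ((-1) ^ k * (Nat.choose 4 k / 6 : ℝ))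
    (max_sub_pow_mem_polyOn 3 ?_)
  rcases le_or_gt (k : ℤ) m with hk | hk
  · exact Or.inl fun x hx => le_trans (by exact_mod_cast hk) hx.1
  · exact Or.inr fun x hx => hx.2.trans (by exact_mod_cast hk)

theorem cubicB_of_nonpos {t : ℝ} (h : t ≤ 0) : cubicB t = 0 := by
  rw [cubicB, if_pos h]

theorem cubicB_of_four_le {t : ℝ} (h : 4 ≤ t) : cubicB t = 0 := by
  obtain rfl | h := h.eq_or_lt
  · norm_num [cubicB]
  · rw [cubicB, if_neg (by linarith), if_neg (by linarith), if_neg (by linarith),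
      if_neg (by linarith), if_neg h.not_ge]

theorem cubicB_of_nonneg_of_le_one {t : ℝ} (h0 : 0 ≤ t) (h1 : t ≤ 1) : cubicB t = t ^ 3 / 6 := by
  obtain rfl | h0 := h0.eq_or_lt
  · norm_num [cubicB]
  · rw [cubicB, if_neg h0.not_ge, if_pos h1]

theorem cubicB_of_one_le_of_le_two {t : ℝ} (h1 : 1 ≤ t) (h2 : t ≤ 2) :
    cubicB t = (-3 * t ^ 3 + 12 * t ^ 2 - 12 * t + 4) / 6 := by
  obtain rfl | h1 := h1.eq_or_lt
  · norm_num [cubicB]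
  · rw [cubicB, if_neg (by linarith), if_neg h1.not_ge, if_pos h2]

theorem cubicB_of_two_le_of_le_three {t : ℝ} (h2 : 2 ≤ t) (h3 : t ≤ 3) :
    cubicB t = (3 * t ^ 3 - 24 * t ^ 2 + 60 * t - 44) / 6 := by
  obtain rfl | h2 := h2.eq_or_lt
  · norm_num [cubicB]
  · rw [cubicB, if_neg (by linarith), if_neg (by linarith), if_neg h2.not_ge, if_pos h3]

theorem cubicB_of_three_le_of_le_four {t : ℝ} (h3 : 3 ≤ t) (h4 : t ≤ 4) :
    cubicB t = (4 - t) ^ 3 / 6 := by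
  obtain rfl | h3 := h3.eq_or_lt
  · norm_num [cubicB]
  · rw [cubicB, if_neg (by linarith), if_neg (by linarith), if_neg (by linarith),
      if_neg h3.not_ge, if_pos h4]

theorem cubicB_shifts_sum_eq_one {u : ℝ} (h0 : 0 ≤ u) (h4 : u ≤ 4) :
    cubicB (u + 3) + cubicB (u + 2) + cubicB (u + 1) + cubicB u +
      cubicB (u - 1) + cubicB (u - 2) + cubicB (u - 3) = 1 := by
  rcases le_total u 1 with h1 | h1
  · rw [cubicB_of_three_le_of_le_four (by linarith) (by linarith),
      cubicB_of_two_le_of_le_three (by linarith) (by linarith),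
      cubicB_of_one_le_of_le_two (by linarith) (by linarith), cubicB_of_nonneg_of_le_one h0 h1,
      cubicB_of_nonpos (by linarith), cubicB_of_nonpos (by linarith),
      cubicB_of_nonpos (by linarith)]
    ring
  rcases le_total u 2 with h2 | h2
  · rw [cubicB_of_four_le (by linarith), cubicB_of_three_le_of_le_four (by linarith) (by linarith),
      cubicB_of_two_le_of_le_three (by linarith) (by linarith), cubicB_of_one_le_of_le_two h1 h2,
      cubicB_of_nonneg_of_le_one (by linarith) (by linarith), cubicB_of_nonpos (by linarith),
      cubicB_of_nonpos (by linarith)]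
    ring
  rcases le_total u 3 with h3 | h3
  · rw [cubicB_of_four_le (by linarith), cubicB_of_four_le (by linarith),
      cubicB_of_three_le_of_le_four (by linarith) (by linarith), cubicB_of_two_le_of_le_three h2 h3,
      cubicB_of_one_le_of_le_two (by linarith) (by linarith),
      cubicB_of_nonneg_of_le_one (by linarith) (by linarith), cubicB_of_nonpos (by linarith)]
    ring
  · rw [cubicB_of_four_le (by linarith), cubicB_of_four_le (by linarith),
      cubicB_of_four_le (by linarith), cubicB_of_three_le_of_le_four h3 h4,
      cubicB_of_two_le_of_le_three (by linarith) (by linarith),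
      cubicB_of_one_le_of_le_two (by linarith) (by linarith),
      cubicB_of_nonneg_of_le_one (by linarith) (by linarith)]
    ring

noncomputable def blendProfile (u : ℝ) : ℝ :=
  1 / 2 * cubicB u + cubicB (u - 1) + cubicB (u - 2) + cubicB (u - 3) + 1 / 2 * cubicB (u - 4)

theorem blendProfile_of_nonpos {u : ℝ} (h : u ≤ 0) : blendProfile u = 0 := by
  simp only [blendProfile, cubicB_of_nonpos (by linarith : u - 1 ≤ 0), cubicB_of_nonpos h,
    cubicB_of_nonpos (by linarith : u - 2 ≤ 0), cubicB_of_nonpos (by linarith : u - 3 ≤ 0),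
    cubicB_of_nonpos (by linarith : u - 4 ≤ 0)]
  norm_num

theorem blendProfile_of_eight_le {u : ℝ} (h : 8 ≤ u) : blendProfile u = 0 := by
  simp only [blendProfile, cubicB_of_four_le (by linarith : 4 ≤ u - 1),
    cubicB_of_four_le (by linarith : 4 ≤ u), cubicB_of_four_le (by linarith : 4 ≤ u - 2),
    cubicB_of_four_le (by linarith : 4 ≤ u - 3), cubicB_of_four_le (by linarith : 4 ≤ u - 4)]
  norm_num

theorem mem_Ioo_of_blendProfile_ne_zero {u : ℝ} (h : blendProfile u ≠ 0) : u ∈ Ioo 0 8 :=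
  ⟨lt_of_not_ge fun hu => h (blendProfile_of_nonpos hu),
    lt_of_not_ge fun hu => h (blendProfile_of_eight_le hu)⟩

theorem blendProfile_add_four_add_self {u : ℝ} (h0 : 0 ≤ u) (h4 : u ≤ 4) :
    blendProfile (u + 4) + blendProfile u = 1 := by
  have hsum := cubicB_shifts_sum_eq_one h0 h4
  simp only [blendProfile, add_sub_assoc]
  norm_num [cubicB_of_four_le (by linarith : 4 ≤ u + 4), cubicB_of_nonpos (by linarith : u - 4 ≤ 0)]
  linarith

theorem contDiff_blendProfile : ContDiff ℝ 2 blendProfile := by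
  unfold blendProfile
  fun_prop

theorem blendProfile_mem_polyOn_Icc (m : ℤ) : blendProfile ∈ polyOn 3 (Icc m (m + 1)) := by
  have hshift (j : ℤ) : (fun u => cubicB (u - j)) ∈ polyOn 3 (Icc m (m + 1)) :=
    comp_mem_polyOn_of_affine (cubicB_mem_polyOn_Icc (m - j)) 1 (-j) (fun u => by ring)
      fun u hu => ⟨by push_cast; linarith [hu.1], by push_cast; linarith [hu.2]⟩
  convert add_mem (add_mem (add_mem (add_mem (Submodule.smul_mem _ (1 / 2) (hshift 0)) (hshift 1))
    (hshift 2)) (hshift 3)) (Submodule.smul_mem _ (1 / 2) (hshift 4)) using 1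
  funext u
  simp [blendProfile]

theorem eq_floor_sub_one_or_eq_floor {i : ℤ} {ξ : ℝ} (h1 : (i : ℝ) < ξ) (h2 : ξ < i + 2) :
    i = ⌊ξ⌋ - 1 ∨ i = ⌊ξ⌋ := by
  have hle : i ≤ ⌊ξ⌋ := Int.le_floor.2 h1.le
  have hlt : ⌊ξ⌋ < i + 2 := Int.floor_lt.2 (by push_cast; exact h2)
  omega

noncomputable def blend (i : ℤ) (ξ : ℝ) : ℝ := blendProfile (4 * ξ - 4 * i)

theorem blend_eq_zero_of_notMem {i : ℤ} {ξ : ℝ} (h : ξ ∉ Icc (i : ℝ) (i + 2)) : blend i ξ = 0 := by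
  rw [mem_Icc, not_and_or, not_le, not_le] at h
  rcases h with h | h
  · exact blendProfile_of_nonpos (by linarith)
  · exact blendProfile_of_eight_le (by linarith)

theorem eq_floor_sub_one_or_eq_floor_of_blend_ne_zero {i : ℤ} {ξ : ℝ} (h : blend i ξ ≠ 0) :
    i = ⌊ξ⌋ - 1 ∨ i = ⌊ξ⌋ := by
  obtain ⟨h0, h8⟩ := mem_Ioo_of_blendProfile_ne_zero h
  exact eq_floor_sub_one_or_eq_floor (by linarith) (by linarith)

theorem finsum_blend (ξ : ℝ) : ∑ᶠ i : ℤ, blend i ξ = 1 := by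
  have hsupp : (Function.support fun i => blend i ξ) ⊆ ({⌊ξ⌋ - 1, ⌊ξ⌋} : Finset ℤ) :=
    fun i hi => by simpa using eq_floor_sub_one_or_eq_floor_of_blend_ne_zero hi
  rw [finsum_eq_sum_of_support_subset _ hsupp, Finset.sum_pair (by omega)]
  have h0 : (⌊ξ⌋ : ℝ) ≤ ξ := Int.floor_le ξ
  have h1 : ξ < ⌊ξ⌋ + 1 := Int.lt_floor_add_one ξ
  have hshift : 4 * ξ - 4 * ((⌊ξ⌋ - 1 : ℤ) : ℝ) = 4 * ξ - 4 * ⌊ξ⌋ + 4 := by push_cast; ring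
  rw [blend, hshift]
  exact blendProfile_add_four_add_self (by linarith) (by linarith)

theorem contDiff_blend (i : ℤ) : ContDiff ℝ 2 (blend i) :=
  contDiff_blendProfile.comp (by fun_prop)

theorem blend_mem_polyOn (i k : ℤ) : blend i ∈ polyOn 3 (Icc (k / 4) ((k + 1) / 4)) :=
  comp_mem_polyOn_of_affine (blendProfile_mem_polyOn_Icc (k - 4 * i)) 4 (-4 * i)
    (fun ξ => by ring) fun ξ hξ => ⟨by push_cast; linarith [hξ.1], by push_cast; linarith [hξ.2]⟩

/-- Polynomial one-ring blending functions obtained from five consecutive cubic B-splines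
on a grid scaled by `4`, mask `(1/2, 1, 1, 1, 1/2)`:
`w*_i(ξ) = ½B(4ξ-4i) + B(4ξ-4i-1) + B(4ξ-4i-2) + B(4ξ-4i-3) + ½B(4ξ-4i-4)`.
Then (a) they form a partition of unity; (b) `w*_i` vanishes outside `[i, i+2]`;
(c) at most two are nonzero at any point; (d) each `w*_i` is `C²` on `ℝ`; (e) each `w*_i`
agrees with a polynomial of degree `≤ 3` on each interval `[k/4, (k+1)/4]`, `k ∈ ℤ`. -/
theorem mask_half_blend_properties (w : ℤ → ℝ → ℝ)
    (hw : ∀ i : ℤ, ∀ ξ : ℝ, w i ξ =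
      (1 / 2) * cubicB (4 * ξ - 4 * (i : ℝ)) + cubicB (4 * ξ - 4 * (i : ℝ) - 1) +
        cubicB (4 * ξ - 4 * (i : ℝ) - 2) + cubicB (4 * ξ - 4 * (i : ℝ) - 3) +
        (1 / 2) * cubicB (4 * ξ - 4 * (i : ℝ) - 4)) :
    (∀ ξ : ℝ, (∑ᶠ i : ℤ, w i ξ) = 1) ∧
    (∀ i : ℤ, ∀ ξ : ℝ, ξ ∉ Set.Icc (i : ℝ) ((i : ℝ) + 2) → w i ξ = 0) ∧
    (∀ ξ : ℝ, ∃ a b : ℤ, ∀ i : ℤ, w i ξ ≠ 0 → i = a ∨ i = b) ∧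
    (∀ i : ℤ, ContDiff ℝ 2 (w i)) ∧
    (∀ i k : ℤ, ∃ p : Polynomial ℝ, p.natDegree ≤ 3 ∧
      ∀ ξ ∈ Set.Icc ((k : ℝ) / 4) (((k : ℝ) + 1) / 4), w i ξ = p.eval ξ) := by
  obtain rfl : w = blend := funext fun i => funext (hw i)
  refine ⟨finsum_blend, fun i ξ => blend_eq_zero_of_notMem,
    fun ξ => ⟨_, _, fun i => eq_floor_sub_one_or_eq_floor_of_blend_ne_zero⟩, contDiff_blend,
    fun i k => ?_⟩
  obtain ⟨p, hp, hblend⟩ := blend_mem_polyOn i k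
  exact ⟨p, hp, fun ξ hξ => hblend hξ⟩
end
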